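/- arXiv:2011.08635 — 2 statements merged into one kernel-verified Lean document; each statement's English description precedes it below -/
import Mathlib

section
/- Let G be a finite simple graph of order n ≥ 2. Then γ*_{r3}(G) = 3 if and only if G is the empty graph on 3 vertices (the complement of K_3) or the path P_2 on two vertices. -/
open SimpleGraph Finset

/-- A `k`-rainbow dominating function on a graph `H`. -/
def IsRDF {W : Type*} (H : SimpleGraph W) (k : ℕ) (f : W → Finset (Fin k)) : Prop :=
  ∀ w, f w = ∅ → ∀ c : Fin k, ∃ u, H.Adj w u ∧ c ∈ f u

/-- The weight of a rainbow dominating function. -/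
noncomputable def rdfWeight {W : Type*} [Fintype W] {k : ℕ} (f : W → Finset (Fin k)) : ℕ :=
  ∑ w, (f w).card

/-- The `k`-rainbow domination number of a graph. -/
noncomputable def rdn {W : Type*} [Fintype W] (H : SimpleGraph W) (k : ℕ) : ℕ :=
  sInf {n | ∃ f : W → Finset (Fin k), IsRDF H k f ∧ rdfWeight f = n}

/-- The middle graph of `G`, on vertex set `V(G) ⊕ E(G)`. -/
def middleGraph {V : Type*} (G : SimpleGraph V) : SimpleGraph (V ⊕ G.edgeSet) where
  Adj x y :=
    match x, y with
    | Sum.inl _, Sum.inl _ => False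
    | Sum.inl v, Sum.inr e => v ∈ (e : Sym2 V)
    | Sum.inr e, Sum.inl v => v ∈ (e : Sym2 V)
    | Sum.inr e, Sum.inr f => e ≠ f ∧ ∃ v, v ∈ (e : Sym2 V) ∧ v ∈ (f : Sym2 V)
  symm := by
    refine ⟨?_⟩
    rintro (v | e) (w | f) h
    · exact h.elim
    · exact h
    · exact h
    · exact ⟨Ne.symm h.1, h.2.imp fun v hv => ⟨hv.2, hv.1⟩⟩
  loopless := by
    refine ⟨?_⟩
    rintro (v | e) h
    · exact h.elim
    · exact h.1 rfl

/-- The middle `k`-rainbow domination number `γ*_{rk}(G)`. -/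
noncomputable def mrdn {V : Type*} [Fintype V] (G : SimpleGraph V) (k : ℕ) : ℕ :=
  letI := Classical.decEq V
  letI : DecidableRel G.Adj := fun _ _ => Classical.dec _
  rdn (middleGraph G) k

/-- The `k`-rainbow domatic number: the maximum size of a family of `k`-rainbow
dominating functions with `∑ i |f i v| ≤ k` for each vertex `v`. -/
noncomputable def rdomatic {W : Type*} (H : SimpleGraph W) (k : ℕ) : ℕ :=
  sSup {d | ∃ F : Fin d → W → Finset (Fin k), Function.Injective F ∧
    (∀ i, IsRDF H k (F i)) ∧ ∀ w, (∑ i, (F i w).card) ≤ k}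

/-- The matching number `α'(G)`. -/
noncomputable def matchingNumber {V : Type*} [Fintype V] (G : SimpleGraph V) : ℕ :=
  sSup {n | ∃ M : Finset (Sym2 V), ↑M ⊆ G.edgeSet ∧
    (∀ e ∈ M, ∀ f ∈ M, e ≠ f → ∀ v : V, ¬(v ∈ e ∧ v ∈ f)) ∧ M.card = n}

/-!
A `k`-rainbow dominating function has weight at least `min k |W|`: if some label is empty, its
neighbours already carry all `k` colours. For `K̄₃` and `P₂` the middle graph has exactly three
vertices, so this bound is attained by labelling every vertex `{0}`. Conversely, an edgeless `G`
has an edgeless middle graph, whose domination number is `|V|`. If `G` has an edge and `|V| ≥ 3`,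
every 3-rainbow dominating function of `M(G)` has weight at least 4: some vertex of `G` or the
edge itself gets an empty label, and the three colours in its neighbourhood are joined by the
nonempty label of a vertex or edge outside that neighbourhood.
-/

section RainbowDomination

variable {W : Type*} {H : SimpleGraph W} {k : ℕ} {f : W → Finset (Fin k)}

lemma isRDF_of_forall_nonempty (hf : ∀ w, (f w).Nonempty) : IsRDF H k f :=
  fun w hw => absurd hw (hf w).ne_empty

lemma isRDF_const_univ : IsRDF H k fun _ => univ :=
  fun _ hw c => (eq_empty_iff_forall_notMem.mp hw c (mem_univ c)).elim

lemma IsRDF.nonempty_of_forall_not_adj (hf : IsRDF H k f) (hk : 0 < k) {w : W}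
    (hw : ∀ u, ¬H.Adj w u) : (f w).Nonempty := by
  rw [nonempty_iff_ne_empty]
  intro h
  obtain ⟨u, hu, -⟩ := hf w h ⟨0, hk⟩
  exact hw u hu

variable [Fintype W]

lemma card_le_rdfWeight (hf : ∀ w, (f w).Nonempty) : Fintype.card W ≤ rdfWeight f := by
  simpa [rdfWeight] using
    card_nsmul_le_sum univ (fun w => (f w).card) 1 fun w _ => (hf w).card_pos

/-- The `k` colours forced by the empty label `f w` all sit on neighbours of `w`, so not on `x`. -/
lemma IsRDF.add_card_le_rdfWeight (hf : IsRDF H k f) {w x : W} (hw : f w = ∅)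
    (hx : ¬H.Adj w x) : k + (f x).card ≤ rdfWeight f := by
  classical
  set N := univ.filter (H.Adj w)
  have hcover : k ≤ ∑ u ∈ N, (f u).card := calc
    k = (univ : Finset (Fin k)).card := by simp
    _ ≤ (N.biUnion f).card := card_le_card fun c _ => by
        obtain ⟨u, hu, hc⟩ := hf w hw c
        exact mem_biUnion.mpr ⟨u, by simpa [N] using hu, hc⟩
    _ ≤ ∑ u ∈ N, (f u).card := card_biUnion_le
  have hxN : x ∉ N := by simpa [N] using hx
  calc k + (f x).card ≤ ∑ u ∈ insert x N, (f u).card := by rw [sum_insert hxN]; omega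
    _ ≤ rdfWeight f := sum_le_univ_sum_of_nonneg fun _ => Nat.zero_le _

lemma IsRDF.min_le_rdfWeight (hf : IsRDF H k f) : min k (Fintype.card W) ≤ rdfWeight f := by
  rcases em (∃ w, f w = ∅) with ⟨w, hw⟩ | h
  · have := hf.add_card_le_rdfWeight hw (H.irrefl (v := w))
    omega
  · exact (min_le_right _ _).trans
      (card_le_rdfWeight fun w => nonempty_iff_ne_empty.mpr fun hw => h ⟨w, hw⟩)

variable (H k) in
lemma exists_isRDF_rdfWeight_eq_rdn : ∃ f, IsRDF H k f ∧ rdfWeight f = rdn H k :=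
  Nat.sInf_mem (s := {n | ∃ f, IsRDF H k f ∧ rdfWeight f = n}) ⟨_, _, isRDF_const_univ, rfl⟩

lemma rdn_le (hf : IsRDF H k f) : rdn H k ≤ rdfWeight f :=
  Nat.sInf_le ⟨f, hf, rfl⟩

lemma le_rdn {n : ℕ} (h : ∀ f, IsRDF H k f → n ≤ rdfWeight f) : n ≤ rdn H k := by
  obtain ⟨f, hf, hw⟩ := exists_isRDF_rdfWeight_eq_rdn H k
  exact hw ▸ h f hf

lemma rdn_le_card (hk : 0 < k) : rdn H k ≤ Fintype.card W := by
  simpa [rdfWeight] using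
    rdn_le (H := H)
      (isRDF_of_forall_nonempty (f := fun _ => {⟨0, hk⟩}) fun _ => singleton_nonempty _)

lemma rdn_eq_of_card_eq (hW : Fintype.card W = k) (hk : 0 < k) : rdn H k = k :=
  le_antisymm ((rdn_le_card hk).trans hW.le)
    (le_rdn fun _ hf => by simpa [hW] using hf.min_le_rdfWeight)

lemma rdn_bot (hk : 0 < k) : rdn (⊥ : SimpleGraph W) k = Fintype.card W :=
  le_antisymm (rdn_le_card hk)
    (le_rdn fun _ hf => card_le_rdfWeight fun _ => hf.nonempty_of_forall_not_adj hk fun _ => id)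

end RainbowDomination

section Graphs

variable {V : Type*}

lemma exists_notMem_sym2 [Fintype V] (hV : 3 ≤ Fintype.card V) (e : Sym2 V) : ∃ y, y ∉ e := by
  classical
  induction e using Sym2.ind with
  | h a b =>
    obtain ⟨y, -, hy⟩ := exists_mem_notMem_of_card_lt_card (s := {a, b}) (t := univ)
      (card_le_two.trans_lt (by rw [card_univ]; omega))
    exact ⟨y, by simpa using hy⟩

lemma card_add_card_edgeSet_eq [Fintype V] {W : Type*} [Fintype W] {G : SimpleGraph V}
    {G' : SimpleGraph W} [Fintype G.edgeSet] [Fintype G'.edgeSet] (φ : G ≃g G') :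
    Fintype.card V + Fintype.card G.edgeSet = Fintype.card W + Fintype.card G'.edgeSet := by
  classical
  rw [Fintype.card_congr φ.toEquiv, ← edgeFinset_card, ← edgeFinset_card, φ.card_edgeFinset_eq]

lemma nonempty_iso_pathGraph_two [Fintype V] {G : SimpleGraph V} (hV : Fintype.card V = 2)
    {a b : V} (hab : G.Adj a b) : Nonempty (G ≃g pathGraph 2) := by
  classical
  have huniv : ({a, b} : Finset V) = univ := eq_univ_of_card _ (by rw [card_pair hab.ne, hV])
  have hG : G = ⊤ := by
    ext x y
    have hx : x ∈ ({a, b} : Finset V) := huniv ▸ mem_univ x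
    have hy : y ∈ ({a, b} : Finset V) := huniv ▸ mem_univ y
    simp only [mem_insert, mem_singleton] at hx hy
    rcases hx with rfl | rfl <;> rcases hy with rfl | rfl <;>
      simp [hab, hab.symm, hab.ne, hab.ne.symm]
  subst hG
  exact ⟨pathGraph_two_eq_top ▸ Iso.completeGraph (Fintype.equivFinOfCardEq hV)⟩

end Graphs

section MiddleGraph

variable {V : Type*}

lemma mrdn_eq_rdn [Fintype V] (G : SimpleGraph V) [Fintype G.edgeSet] (k : ℕ) :
    mrdn G k = rdn (middleGraph G) k := by
  unfold mrdn
  convert rfl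

lemma middleGraph_bot : middleGraph (⊥ : SimpleGraph V) = ⊥ := by
  ext x y
  rcases x with v | ⟨e, he⟩
  · rcases y with w | ⟨e, he⟩
    · exact Iff.rfl
    · simp at he
  · simp at he

lemma rdn_middleGraph_of_eq_bot [Fintype V] {G : SimpleGraph V} [Fintype G.edgeSet] {k : ℕ}
    (hG : G = ⊥) (hk : 0 < k) : rdn (middleGraph G) k = Fintype.card V := by
  subst hG
  rw [middleGraph_bot, rdn_bot hk]
  simp

theorem IsRDF.lt_rdfWeight_middleGraph [Fintype V] {G : SimpleGraph V} [Fintype G.edgeSet]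
    {k : ℕ} {f : V ⊕ G.edgeSet → Finset (Fin k)}
    (hf : IsRDF (middleGraph G) k f) (hk : 0 < k) (hkV : k ≤ Fintype.card V)
    (hV : 3 ≤ Fintype.card V) (e : G.edgeSet) : k < rdfWeight f := by
  rcases em (∃ v, f (.inl v) = ∅) with ⟨v, hv⟩ | hnone
  · obtain ⟨_ | d, hvd, hc⟩ := hf _ hv ⟨0, hk⟩
    · exact hvd.elim
    obtain ⟨y, hy⟩ := exists_notMem_sym2 hV d
    by_cases hfy : f (.inl y) = ∅
    · have := hf.add_card_le_rdfWeight hfy (x := .inr d) hy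
      have := card_pos.mpr ⟨_, hc⟩
      omega
    · have := hf.add_card_le_rdfWeight hv (x := .inl y) id
      have := card_pos.mpr (nonempty_iff_ne_empty.mpr hfy)
      omega
  · have hnonempty : ∀ v, (f (.inl v)).Nonempty := fun v =>
      nonempty_iff_ne_empty.mpr fun h => hnone ⟨v, h⟩
    by_cases hfe : f (.inr e) = ∅
    · obtain ⟨c, hc⟩ := exists_notMem_sym2 hV e
      have := hf.add_card_le_rdfWeight hfe (x := .inl c) hc
      have := (hnonempty c).card_pos
      omega
    · have hsplit : rdfWeight f = ∑ v, (f (.inl v)).card + ∑ e, (f (.inr e)).card :=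
        Fintype.sum_sum_type _
      have hvertices : Fintype.card V ≤ ∑ v, (f (.inl v)).card :=
        card_le_rdfWeight (f := fun v => f (.inl v)) hnonempty
      have hedge : (f (.inr e)).card ≤ ∑ e, (f (.inr e)).card :=
        single_le_sum (f := fun e => (f (.inr e)).card) (fun _ _ => Nat.zero_le _) (mem_univ e)
      have := card_pos.mpr (nonempty_iff_ne_empty.mpr hfe)
      omega

end MiddleGraph

theorem stmt1_general {V : Type*} [Fintype V] (G : SimpleGraph V) :
    mrdn G 3 = 3 ↔
      (Nonempty (G ≃g (⊥ : SimpleGraph (Fin 3))) ∨ Nonempty (G ≃g pathGraph 2)) := by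
  classical
  rw [mrdn_eq_rdn]
  constructor
  · intro h3
    by_cases hG : G = ⊥
    · rw [rdn_middleGraph_of_eq_bot hG three_pos] at h3
      subst hG
      exact .inl ⟨⟨Fintype.equivFinOfCardEq h3, by simp⟩⟩
    · obtain ⟨a, b, hab⟩ := ne_bot_iff_exists_adj.mp hG
      have h2 : 2 ≤ Fintype.card V := Fintype.one_lt_card_iff.mpr ⟨a, b, hab.ne⟩
      have hV_lt : ¬ 3 ≤ Fintype.card V := fun hV => by
        obtain ⟨f, hf, hw⟩ := exists_isRDF_rdfWeight_eq_rdn (middleGraph G) 3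
        have := hf.lt_rdfWeight_middleGraph three_pos hV hV ⟨s(a, b), hab⟩
        omega
      exact .inr (nonempty_iso_pathGraph_two (by omega) hab)
  · rintro (⟨⟨φ⟩⟩ | ⟨⟨φ⟩⟩)
    · refine rdn_eq_of_card_eq ?_ three_pos
      rw [Fintype.card_sum, card_add_card_edgeSet_eq φ]
      simp
    · refine rdn_eq_of_card_eq ?_ three_pos
      rw [Fintype.card_sum, card_add_card_edgeSet_eq φ]
      simp only [Fintype.card_fin, pathGraph_two_eq_top, edgeSet_top, Fintype.card_ofFinset,
        Set.mem_compl_iff, Sym2.mem_diagSet]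
      decide

/-- For a graph of order `n ≥ 2`, `γ*_{r3}(G) = 3` iff `G` is the empty
graph on three vertices or the path `P₂`. -/
theorem stmt1 {V : Type*} [Fintype V] (G : SimpleGraph V) (h : 2 ≤ Fintype.card V) :
    mrdn G 3 = 3 ↔
      (Nonempty (G ≃g (⊥ : SimpleGraph (Fin 3))) ∨ Nonempty (G ≃g pathGraph 2)) :=
  stmt1_general G
end

section
/- For every n ≥ 4, the 3-rainbow domatic number of the middle graph of the cycle C_n equals 4, i.e., d_{r3}(M(C_n)) = 4. -/
open SimpleGraph Finset

/-!
Upper bound. In `M(C_n)` a vertex `v` of the cycle is adjacent only to its two edges, so every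
function that leaves `v` empty spends at least `3` on these two edges, whose joint budget is `6`.
In a family of five functions at most two are therefore empty at `v`, and the other three put a
single colour on `v` and nothing on its two edges. Two adjacent vertices have such a function in
common; it leaves the edge between them empty, and only two colours appear around that edge.

Lower bound. The even-indexed edges `D` dominate `M(C_n)`. One function puts all three colours on
`D`; the other three put the single colour `σ x + c` (`c = 0, 1, 2`) on every `x ∉ D`, where the
colouring `σ` lets each edge of `D` see all three colours outside `D`. Every element then carries
weight exactly `3`.
-/

section Counting

variable {ι : Type*} [Fintype ι] {k : ℕ} {g h : ι → ℕ}

theorem mul_card_filter_eq_zero_le_sum (hgh : ∀ i, g i = 0 → k ≤ h i) :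
    k * #{i | g i = 0} ≤ ∑ i with g i = 0, h i := by
  rw [mul_comm, ← smul_eq_mul, ← sum_const]
  exact sum_le_sum fun i hi => hgh i (mem_filter.1 hi).2

theorem card_filter_eq_zero_le_two (hk : 0 < k) (hh : ∑ i, h i ≤ 2 * k)
    (hgh : ∀ i, g i = 0 → k ≤ h i) : #{i | g i = 0} ≤ 2 := by
  have := (mul_card_filter_eq_zero_le_sum hgh).trans
    ((sum_le_sum_of_subset (filter_subset _ _)).trans hh)
  exact Nat.le_of_mul_le_mul_left (by linarith) hk

theorem eq_one_and_eq_zero_of_ne_zero (hι : k + 2 ≤ Fintype.card ι) (hg : ∑ i, g i ≤ k)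
    (hh : ∑ i, h i ≤ 2 * k) (hgh : ∀ i, g i = 0 → k ≤ h i) {i : ι} (hi : g i ≠ 0) :
    g i = 1 ∧ h i = 0 := by
  classical
  set Z := ({i | g i = 0} : Finset ι)
  set N := ({i | ¬g i = 0} : Finset ι)
  have hiN : i ∈ N := mem_filter.2 ⟨mem_univ i, hi⟩
  have hk : 0 < k := by
    have := (single_le_sum (fun j _ => Nat.zero_le (g j)) (mem_univ i)).trans hg
    omega
  have hZ : #Z ≤ 2 := card_filter_eq_zero_le_two hk hh hgh
  have hZN : #Z + #N = Fintype.card ι := card_filter_add_card_filter_not _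
  have hN : #(N.erase i) + g i ≤ k := calc
    #(N.erase i) + g i ≤ ∑ j ∈ N.erase i, g j + g i := by
        gcongr
        rw [card_eq_sum_ones]
        exact sum_le_sum fun j hj => Nat.one_le_iff_ne_zero.2 (mem_filter.1 (mem_of_mem_erase hj)).2
    _ = ∑ j ∈ N, g j := sum_erase_add _ _ hiN
    _ ≤ k := (sum_le_sum_of_subset (subset_univ N)).trans hg
  have hNerase : #(N.erase i) + 1 = #N := card_erase_add_one hiN
  have hhZ : k * #Z ≤ ∑ j ∈ Z, h j := mul_card_filter_eq_zero_le_sum hgh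
  have hhZN : ∑ j ∈ Z, h j + ∑ j ∈ N, h j = ∑ j, h j := sum_filter_add_sum_filter_not _ _ _
  have hZ2 : #Z = 2 := by omega
  refine ⟨by omega, ?_⟩
  rw [hZ2] at hhZ
  exact (sum_eq_zero_iff.1 (by omega)) i hiN

end Counting

section RainbowDomination

variable {W : Type*} {H : SimpleGraph W} {k : ℕ}

theorem IsRDF.le_card_of_forall_adj {f : W → Finset (Fin k)} (hf : IsRDF H k f) {w : W}
    (hw : f w = ∅) {T : Finset (Fin k)} (hT : ∀ u, H.Adj w u → f u ⊆ T) : k ≤ #T := by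
  have : (univ : Finset (Fin k)) ⊆ T := fun c _ => by
    obtain ⟨u, hwu, hc⟩ := hf w hw c
    exact hT u hwu hc
  simpa using card_le_card this

def IsRainbowDominatingFamily {ι : Type*} [Fintype ι] (H : SimpleGraph W) (k : ℕ)
    (F : ι → W → Finset (Fin k)) : Prop :=
  (∀ i, IsRDF H k (F i)) ∧ ∀ w, ∑ i, (F i w).card ≤ k

theorem rdomatic_eq_of_forall_le {d : ℕ}
    (hd : ∃ F : Fin d → W → Finset (Fin k), Function.Injective F ∧ IsRainbowDominatingFamily H k F)
    (hle : ∀ d' (F : Fin d' → W → Finset (Fin k)), IsRainbowDominatingFamily H k F → d' ≤ d) :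
    rdomatic H k = d := by
  have hbdd : ∀ d' ∈ {d | ∃ F : Fin d → W → Finset (Fin k), Function.Injective F ∧
      (∀ i, IsRDF H k (F i)) ∧ ∀ w, (∑ i, (F i w).card) ≤ k}, d' ≤ d :=
    fun d' ⟨F, _, hF⟩ => hle d' F hF
  exact le_antisymm (csSup_le ⟨d, hd⟩ hbdd) (le_csSup ⟨d, hbdd⟩ hd)

end RainbowDomination

section Construction

variable {W : Type*} {H : SimpleGraph W} {k : ℕ}

def fullOn (D : Set W) [DecidablePred (· ∈ D)] : W → Finset (Fin k) :=
  fun w => if w ∈ D then univ else ∅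

def shiftedColoringOff (D : Set W) [DecidablePred (· ∈ D)] (σ : W → Fin k) (c : Fin k) :
    W → Finset (Fin k) :=
  fun w => if w ∈ D then ∅ else {σ w + c}

variable {D : Set W}

theorem isRDF_fullOn [DecidablePred (· ∈ D)] (hD : ∀ w ∉ D, ∃ u ∈ D, H.Adj w u) :
    IsRDF H k (fullOn D) := by
  intro w hw c
  have hwD : w ∉ D := fun hwD => by
    simp only [fullOn, hwD, if_true] at hw
    exact notMem_empty c (hw ▸ mem_univ c)
  obtain ⟨u, huD, hwu⟩ := hD w hwD
  exact ⟨u, hwu, by simp [fullOn, huD]⟩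

theorem isRDF_shiftedColoringOff [DecidablePred (· ∈ D)] [NeZero k] {σ : W → Fin k}
    (hσ : ∀ w ∈ D, ∀ c, ∃ u ∉ D, H.Adj w u ∧ σ u = c) (c : Fin k) :
    IsRDF H k (shiftedColoringOff D σ c) := by
  intro w hw c'
  have hwD : w ∈ D := by
    by_contra hwD
    simp [shiftedColoringOff, hwD] at hw
  obtain ⟨u, huD, hwu, hu⟩ := hσ w hwD (c' - c)
  exact ⟨u, hwu, by simp [shiftedColoringOff, huD, hu]⟩

theorem exists_injective_isRainbowDominatingFamily [NeZero k] {σ : W → Fin k}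
    (hD : ∀ w ∉ D, ∃ u ∈ D, H.Adj w u) (hσ : ∀ w ∈ D, ∀ c, ∃ u ∉ D, H.Adj w u ∧ σ u = c)
    {x : W} (hx : x ∉ D) :
    ∃ F : Fin (k + 1) → W → Finset (Fin k),
      Function.Injective F ∧ IsRainbowDominatingFamily H k F := by
  classical
  refine ⟨Fin.cons (fullOn D) (shiftedColoringOff D σ), ?_, ?_, ?_⟩
  · refine Fin.cons_injective_iff.2 ⟨?_, fun c c' hcc' => ?_⟩
    · rintro ⟨c, hc⟩
      simpa [fullOn, shiftedColoringOff, hx] using congrFun hc x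
    · simpa [shiftedColoringOff, hx] using congrFun hcc' x
  · exact Fin.cases (isRDF_fullOn hD) (isRDF_shiftedColoringOff hσ)
  · intro w
    by_cases hw : w ∈ D <;> simp [Fin.sum_univ_succ, fullOn, shiftedColoringOff, hw]

end Construction

section MiddleGraph

variable {V : Type*} {G : SimpleGraph V}

@[simp]
theorem middleGraph_adj_inl_inl {v w : V} : ¬(middleGraph G).Adj (.inl v) (.inl w) := id

@[simp]
theorem middleGraph_adj_inl_inr {v : V} {e : G.edgeSet} :
    (middleGraph G).Adj (.inl v) (.inr e) ↔ v ∈ (e : Sym2 V) := Iff.rfl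

@[simp]
theorem middleGraph_adj_inr_inl {v : V} {e : G.edgeSet} :
    (middleGraph G).Adj (.inr e) (.inl v) ↔ v ∈ (e : Sym2 V) := Iff.rfl

variable {k : ℕ}

theorem IsRDF.le_card_add_card_of_inl {f : V ⊕ G.edgeSet → Finset (Fin k)}
    (hf : IsRDF (middleGraph G) k f) {v : V} (hv : f (.inl v) = ∅) {a b : G.edgeSet}
    (hab : ∀ e : G.edgeSet, v ∈ (e : Sym2 V) → e = a ∨ e = b) :
    k ≤ #(f (.inr a)) + #(f (.inr b)) := by
  refine (hf.le_card_of_forall_adj hv ?_).trans (card_union_le _ _)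
  rintro (w | e) hadj
  · exact (middleGraph_adj_inl_inl hadj).elim
  · rcases hab e hadj with rfl | rfl
    exacts [subset_union_left, subset_union_right]

theorem IsRDF.le_card_add_card_of_inr {f : V ⊕ G.edgeSet → Finset (Fin k)}
    (hf : IsRDF (middleGraph G) k f) {e : G.edgeSet} {u w : V} (he : (e : Sym2 V) = s(u, w))
    (hfe : f (.inr e) = ∅) (hedges : ∀ e' : G.edgeSet, u ∈ (e' : Sym2 V) ∨ w ∈ (e' : Sym2 V) →
      f (.inr e') = ∅) :
    k ≤ #(f (.inl u)) + #(f (.inl w)) := by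
  refine (hf.le_card_of_forall_adj hfe ?_).trans (card_union_le _ _)
  rintro (x | e') hadj
  · rw [middleGraph_adj_inr_inl, he, Sym2.mem_iff] at hadj
    rcases hadj with rfl | rfl
    exacts [subset_union_left, subset_union_right]
  · obtain ⟨-, x, hxe, hxe'⟩ := hadj
    rw [he, Sym2.mem_iff] at hxe
    rcases hxe with rfl | rfl
    exacts [(hedges e' (.inl hxe')).symm ▸ empty_subset _,
      (hedges e' (.inr hxe')).symm ▸ empty_subset _]

variable {ι : Type*} [Fintype ι] {F : ι → V ⊕ G.edgeSet → Finset (Fin k)}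
  {v : V} {a b : G.edgeSet}

theorem IsRainbowDominatingFamily.sum_card_inr_add_card_inr_le
    (hF : IsRainbowDominatingFamily (middleGraph G) k F) :
    ∑ i, (#(F i (.inr a)) + #(F i (.inr b))) ≤ 2 * k := by
  rw [sum_add_distrib, two_mul]
  exact add_le_add (hF.2 _) (hF.2 _)

theorem IsRainbowDominatingFamily.card_filter_inl_eq_empty_le_two
    (hF : IsRainbowDominatingFamily (middleGraph G) k F) (hk : 0 < k)
    (hab : ∀ e : G.edgeSet, v ∈ (e : Sym2 V) → e = a ∨ e = b) :
    #{i | F i (.inl v) = ∅} ≤ 2 := by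
  simpa only [card_eq_zero] using card_filter_eq_zero_le_two hk hF.sum_card_inr_add_card_inr_le
    fun i hi => (hF.1 i).le_card_add_card_of_inl (card_eq_zero.1 hi) hab

theorem IsRainbowDominatingFamily.card_inl_eq_one_and_inr_eq_empty
    (hF : IsRainbowDominatingFamily (middleGraph G) k F) (hι : k + 2 ≤ Fintype.card ι)
    (hab : ∀ e : G.edgeSet, v ∈ (e : Sym2 V) → e = a ∨ e = b) {i : ι} (hi : F i (.inl v) ≠ ∅) :
    #(F i (.inl v)) = 1 ∧ ∀ e : G.edgeSet, v ∈ (e : Sym2 V) → F i (.inr e) = ∅ := by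
  obtain ⟨hone, hzero⟩ := eq_one_and_eq_zero_of_ne_zero hι (hF.2 _)
    hF.sum_card_inr_add_card_inr_le
    (fun j hj => (hF.1 j).le_card_add_card_of_inl (card_eq_zero.1 hj) hab)
    (card_ne_zero.2 (nonempty_iff_ne_empty.2 hi))
  refine ⟨hone, fun e he => ?_⟩
  rcases hab e he with rfl | rfl <;> exact card_eq_zero.1 (by omega)

theorem IsRainbowDominatingFamily.card_le_succ_of_degree_le_two
    (hF : IsRainbowDominatingFamily (middleGraph G) k F) (hk : 3 ≤ k) {e : G.edgeSet} {u w : V}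
    (he : (e : Sym2 V) = s(u, w)) {a b c d : G.edgeSet}
    (hu : ∀ e' : G.edgeSet, u ∈ (e' : Sym2 V) → e' = a ∨ e' = b)
    (hw : ∀ e' : G.edgeSet, w ∈ (e' : Sym2 V) → e' = c ∨ e' = d) :
    Fintype.card ι ≤ k + 1 := by
  by_contra! hι
  have hZu := hF.card_filter_inl_eq_empty_le_two (by omega) hu
  have hZw := hF.card_filter_inl_eq_empty_le_two (by omega) hw
  obtain ⟨i, hiu, hiw⟩ : ∃ i, F i (.inl u) ≠ ∅ ∧ F i (.inl w) ≠ ∅ := by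
    classical
    have hcover : #(({i | F i (.inl u) = ∅} : Finset ι) ∪ ({i | F i (.inl w) = ∅} : Finset ι))
        < #(univ : Finset ι) := by
      grw [card_union_le, card_univ]
      omega
    obtain ⟨i, -, hi⟩ := exists_mem_notMem_of_card_lt_card hcover
    exact ⟨i, by simpa [not_or] using hi⟩
  obtain ⟨hu1, hue⟩ := hF.card_inl_eq_one_and_inr_eq_empty hι hu hiu
  obtain ⟨hw1, hwe⟩ := hF.card_inl_eq_one_and_inr_eq_empty hι hw hiw
  have := (hF.1 i).le_card_add_card_of_inr he (hue e (he ▸ Sym2.mem_mk_left u w))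
    fun e' he' => he'.elim (hue e') (hwe e')
  omega

end MiddleGraph

section Cycle

variable {n : ℕ}

def cycleEdge (j : Fin (n + 3)) : (cycleGraph (n + 3)).edgeSet :=
  ⟨s(j, j + 1), by simp [cycleGraph_adj]⟩

theorem mem_cycleEdge_iff {v j : Fin (n + 3)} :
    v ∈ (cycleEdge j : Sym2 (Fin (n + 3))) ↔ v = j ∨ v = j + 1 :=
  Sym2.mem_iff

theorem exists_eq_cycleEdge (e : (cycleGraph (n + 3)).edgeSet) : ∃ j, e = cycleEdge j := by
  obtain ⟨e, he⟩ := e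
  induction e using Sym2.ind with
  | _ u v =>
    rcases cycleGraph_adj.1 ((mem_edgeSet _).1 he) with h | h
    · obtain rfl := sub_eq_iff_eq_add.1 h
      exact ⟨v, Subtype.ext (Sym2.eq_iff.2 (.inr ⟨add_comm 1 v, rfl⟩))⟩
    · obtain rfl := sub_eq_iff_eq_add.1 h
      exact ⟨u, Subtype.ext (Sym2.eq_iff.2 (.inl ⟨rfl, add_comm 1 u⟩))⟩

theorem eq_cycleEdge_of_mem {v : Fin (n + 3)} {e : (cycleGraph (n + 3)).edgeSet}
    (h : v ∈ (e : Sym2 (Fin (n + 3)))) : e = cycleEdge (v - 1) ∨ e = cycleEdge v := by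
  obtain ⟨j, rfl⟩ := exists_eq_cycleEdge e
  rcases mem_cycleEdge_iff.1 h with rfl | rfl
  · exact .inr rfl
  · exact .inl (by rw [add_sub_cancel_right])

theorem cycleEdge_injective : Function.Injective (@cycleEdge n) := by
  intro j j' h
  rcases Sym2.eq_iff.1 (congrArg Subtype.val h) with ⟨hj, -⟩ | ⟨rfl, hj'⟩
  · exact hj
  · rw [add_assoc, add_eq_left, Fin.ext_iff] at hj'
    simp [Fin.val_add] at hj'
    exact absurd hj' (by rw [Nat.mod_eq_of_lt (by omega)]; omega)

theorem middleGraph_cycleGraph_adj_cycleEdge_add_one (j : Fin (n + 3)) :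
    (middleGraph (cycleGraph (n + 3))).Adj (.inr (cycleEdge j)) (.inr (cycleEdge (j + 1))) :=
  ⟨cycleEdge_injective.ne (by simp), j + 1, by simp [mem_cycleEdge_iff]⟩

theorem middleGraph_cycleGraph_adj_cycleEdge_sub_one (j : Fin (n + 3)) :
    (middleGraph (cycleGraph (n + 3))).Adj (.inr (cycleEdge j)) (.inr (cycleEdge (j - 1))) := by
  have := (middleGraph_cycleGraph_adj_cycleEdge_add_one (j - 1)).symm
  rwa [sub_add_cancel] at this

theorem even_val_sub_one {j : Fin (n + 3)} (hj : ¬Even (j : ℕ)) :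
    Even ((j - 1 : Fin (n + 3)) : ℕ) := by
  have hj0 : j ≠ 0 := by rintro rfl; simp at hj
  rw [Fin.coe_sub_one, if_neg hj0]
  obtain ⟨m, hm⟩ := Nat.not_even_iff_odd.1 hj
  exact ⟨m, by omega⟩

def evenCycleEdges : Set (Fin (n + 3) ⊕ (cycleGraph (n + 3)).edgeSet) :=
  {w | ∃ j : Fin (n + 3), Even (j : ℕ) ∧ w = .inr (cycleEdge j)}

theorem inr_cycleEdge_mem_evenCycleEdges_iff {j : Fin (n + 3)} :
    .inr (cycleEdge j) ∈ evenCycleEdges ↔ Even (j : ℕ) :=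
  ⟨fun ⟨_, hj', h⟩ => cycleEdge_injective (Sum.inr_injective h) ▸ hj', fun hj => ⟨j, hj, rfl⟩⟩

theorem inl_notMem_evenCycleEdges {v : Fin (n + 3)} : .inl v ∉ evenCycleEdges :=
  fun ⟨_, _, h⟩ => Sum.inl_ne_inr h

/-- The endpoints of each even edge get the colours `0` and `1`, the odd edges the colour `2`.
The last vertex gets `1` because for odd cycles the even edges `n + 2` and `0` meet at `0`. -/
def cycleColoring : Fin (n + 3) ⊕ (cycleGraph (n + 3)).edgeSet → Fin 3 :=
  Sum.elim (fun v => if Even (v : ℕ) ∧ v ≠ Fin.last (n + 2) then 0 else 1) fun _ => 2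

theorem evenCycleEdges_dominating : ∀ w ∉ (evenCycleEdges : Set (Fin (n + 3) ⊕ _)),
    ∃ u ∈ evenCycleEdges, (middleGraph (cycleGraph (n + 3))).Adj w u := by
  rintro (v | e) hw
  · by_cases hv : Even (v : ℕ)
    · exact ⟨.inr (cycleEdge v), inr_cycleEdge_mem_evenCycleEdges_iff.2 hv, by
        simp [mem_cycleEdge_iff]⟩
    · exact ⟨.inr (cycleEdge (v - 1)),
        inr_cycleEdge_mem_evenCycleEdges_iff.2 (even_val_sub_one hv), by simp [mem_cycleEdge_iff]⟩
  · obtain ⟨j, rfl⟩ := exists_eq_cycleEdge e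
    exact ⟨.inr (cycleEdge (j - 1)), inr_cycleEdge_mem_evenCycleEdges_iff.2
      (even_val_sub_one (inr_cycleEdge_mem_evenCycleEdges_iff.not.1 hw)),
      middleGraph_cycleGraph_adj_cycleEdge_sub_one j⟩

theorem exists_adj_cycleColoring_eq : ∀ w ∈ (evenCycleEdges : Set (Fin (n + 3) ⊕ _)), ∀ c,
    ∃ u ∉ evenCycleEdges, (middleGraph (cycleGraph (n + 3))).Adj w u ∧ cycleColoring u = c := by
  rintro _ ⟨j, hj, rfl⟩ c
  by_cases hlast : j = Fin.last (n + 2)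
  · subst hlast
    fin_cases c
    · exact ⟨.inl 0, inl_notMem_evenCycleEdges, by simp [mem_cycleEdge_iff],
        by simp [cycleColoring]⟩
    · exact ⟨.inl (Fin.last _), inl_notMem_evenCycleEdges, by simp [mem_cycleEdge_iff],
        by simp [cycleColoring]⟩
    · refine ⟨.inr (cycleEdge (Fin.last _ - 1)), ?_,
        middleGraph_cycleGraph_adj_cycleEdge_sub_one _, rfl⟩
      rw [inr_cycleEdge_mem_evenCycleEdges_iff, Fin.coe_sub_one, if_neg Fin.last_pos.ne',
        Fin.val_last]
      rw [Fin.val_last] at hj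
      rintro ⟨m, hm⟩
      obtain ⟨m', hm'⟩ := hj
      omega
  · have hval : ((j + 1 : Fin (n + 3)) : ℕ) = j + 1 := by rw [Fin.val_add_one, if_neg hlast]
    have hodd : ¬Even ((j + 1 : Fin (n + 3)) : ℕ) := by
      rw [hval, Nat.even_add_one, not_not]
      exact hj
    fin_cases c
    · exact ⟨.inl j, inl_notMem_evenCycleEdges, by simp [mem_cycleEdge_iff],
        by simp [cycleColoring, hj, hlast]⟩
    · exact ⟨.inl (j + 1), inl_notMem_evenCycleEdges, by simp [mem_cycleEdge_iff],
        by simp [cycleColoring, hodd]⟩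
    · exact ⟨.inr (cycleEdge (j + 1)), inr_cycleEdge_mem_evenCycleEdges_iff.not.2 hodd,
        middleGraph_cycleGraph_adj_cycleEdge_add_one j, rfl⟩

theorem exists_injective_isRainbowDominatingFamily_middleGraph_cycleGraph :
    ∃ F : Fin 4 → Fin (n + 3) ⊕ (cycleGraph (n + 3)).edgeSet → Finset (Fin 3),
      Function.Injective F ∧ IsRainbowDominatingFamily (middleGraph (cycleGraph (n + 3))) 3 F :=
  exists_injective_isRainbowDominatingFamily evenCycleEdges_dominating exists_adj_cycleColoring_eq
    (x := .inl 0) inl_notMem_evenCycleEdges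

theorem IsRainbowDominatingFamily.card_le_four_of_cycleGraph {ι : Type*} [Fintype ι]
    {F : ι → Fin (n + 3) ⊕ (cycleGraph (n + 3)).edgeSet → Finset (Fin 3)}
    (hF : IsRainbowDominatingFamily (middleGraph (cycleGraph (n + 3))) 3 F) :
    Fintype.card ι ≤ 4 :=
  hF.card_le_succ_of_degree_le_two le_rfl (e := cycleEdge 0) (u := 0) (w := 0 + 1) rfl
    (fun _ => eq_cycleEdge_of_mem) fun _ => eq_cycleEdge_of_mem

end Cycle

/-- For `n ≥ 4`, `d_{r3}(M(C_n)) = 4`. -/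
theorem stmt13 (n : ℕ) (hn : 4 ≤ n) :
    rdomatic (middleGraph (cycleGraph n)) 3 = 4 := by
  obtain ⟨m, rfl⟩ : ∃ m, n = m + 3 := ⟨n - 3, by omega⟩
  exact rdomatic_eq_of_forall_le exists_injective_isRainbowDominatingFamily_middleGraph_cycleGraph
    fun d _ hF => by simpa using hF.card_le_four_of_cycleGraph
end
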